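/- Let f : ℕ → ℕ be an injective function having exactly one periodic point, which is a fixed point j̄ (so f(j̄) = j̄ and f^h(k) ≠ k for all h ≥ 1 whenever k ≠ j̄). Then the point spectrum of the isometry S_f on ℓ²(ℕ) is exactly {1}, and every eigenvector of S_f is a scalar multiple of e_{j̄}. -/

import Mathlib

/-!
`S_f` moves the `k`-th coordinate to position `f k`, so it is an isometry and an eigenvector
`S_f x = λ x` satisfies `x k = λ * x (f k)` with `‖λ‖ = 1`. Hence `‖x‖` is constant along every
forward orbit. The orbit of a non-periodic point is injective, so summability of `‖x k‖ ^ p`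
forces `x` to vanish on it. Only the coordinate at the fixed point `j̄` survives, and there
`x j̄ = λ * x j̄` gives `λ = 1`.
-/

noncomputable def e (k : ℕ) : lp (fun _ : ℕ => ℂ) 2 := lp.single 2 k 1

open scoped ENNReal
open Function

theorem Function.Injective.injective_iterate_of_notMem_periodicPts {α : Type*} {f : α → α}
    (hf : Injective f) {a : α} (ha : a ∉ periodicPts f) : Injective fun n => f^[n] a := by
  intro m n hmn
  have hmn' : m - n = 0 := by
    by_contra h
    exact ha (mk_mem_periodicPts (Nat.pos_of_ne_zero h) (iterate_cancel hf hmn))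
  have hnm : n - m = 0 := by
    by_contra h
    exact ha (mk_mem_periodicPts (Nat.pos_of_ne_zero h) (iterate_cancel hf hmn.symm))
  omega

namespace lp

variable {ι 𝕜 : Type*} {p : ℝ≥0∞}

theorem eq_zero_of_norm_comp_injective_eq {E : ι → Type*} [∀ i, NormedAddCommGroup (E i)]
    (hp : 0 < p.toReal) (x : lp E p) {u : ℕ → ι} (hu : Injective u) {c : ℝ}
    (hc : ∀ n, ‖x (u n)‖ = c) : c = 0 := by
  have hsum : Summable fun n => ‖x (u n)‖ ^ p.toReal :=
    ((lp.memℓp x).summable hp).comp_injective hu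
  simp only [hc, summable_const_iff] at hsum
  exact (Real.rpow_eq_zero (hc 0 ▸ norm_nonneg _) hp.ne').1 hsum

variable [DecidableEq ι] [NormedField 𝕜] [Fact (1 ≤ p)] {f : ι → ι}
  {S : lp (fun _ : ι => 𝕜) p →L[𝕜] lp (fun _ : ι => 𝕜) p}

theorem hasSum_apply_of_map_single (hp : p ≠ ∞)
    (hS : ∀ k, S (lp.single p k 1) = lp.single p (f k) 1) (x : lp (fun _ : ι => 𝕜) p) (n : ι) :
    HasSum (fun k => x k * lp.single (E := fun _ : ι => 𝕜) p (f k) 1 n) (S x n) := by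
  have hx : HasSum (fun k => x k • lp.single p k (1 : 𝕜)) x := by
    simpa [← lp.single_smul] using lp.hasSum_single hp x
  have := (lp.evalCLM 𝕜 (fun _ : ι => 𝕜) p n).hasSum (S.hasSum hx)
  simp only [map_smul, hS, smul_eq_mul] at this
  exact this

theorem apply_map_of_map_single (hp : p ≠ ∞) (hf : Injective f)
    (hS : ∀ k, S (lp.single p k 1) = lp.single p (f k) 1) (x : lp (fun _ : ι => 𝕜) p) (k : ι) :
    S x (f k) = x k := by
  refine (hasSum_apply_of_map_single hp hS x (f k)).unique ?_
  convert hasSum_ite_eq k (x k) using 2 with j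
  by_cases hj : j = k
  · simp [hj]
  · rw [if_neg hj, lp.single_apply_ne p _ _ (hf.ne (Ne.symm hj)), mul_zero]

theorem apply_eq_zero_of_notMem_range (hp : p ≠ ∞)
    (hS : ∀ k, S (lp.single p k 1) = lp.single p (f k) 1) (x : lp (fun _ : ι => 𝕜) p) {n : ι}
    (hn : n ∉ Set.range f) : S x n = 0 := by
  refine (hasSum_apply_of_map_single hp hS x n).unique ?_
  convert hasSum_zero with k
  rw [lp.single_apply_ne p _ _ fun h => hn ⟨k, h.symm⟩, mul_zero]

theorem norm_map_of_map_single (hp : p ≠ ∞) (hf : Injective f)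
    (hS : ∀ k, S (lp.single p k 1) = lp.single p (f k) 1) (x : lp (fun _ : ι => 𝕜) p) :
    ‖S x‖ = ‖x‖ := by
  have hp₀ : 0 < p.toReal := ENNReal.toReal_pos (zero_lt_one.trans_le Fact.out).ne' hp
  have hSx := (hf.hasSum_iff fun n hn => by
    simp [apply_eq_zero_of_notMem_range hp hS x hn, Real.zero_rpow hp₀.ne']).2
    (lp.hasSum_norm hp₀ (S x))
  simp only [comp_def, apply_map_of_map_single hp hf hS] at hSx
  exact Real.rpow_left_injOn hp₀.ne' (norm_nonneg _) (norm_nonneg _)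
    (hSx.unique (lp.hasSum_norm hp₀ x))

variable {x : lp (fun _ : ι => 𝕜) p} {lam : 𝕜}

theorem apply_eq_mul_apply_of_map_eq_smul (hp : p ≠ ∞) (hf : Injective f)
    (hS : ∀ k, S (lp.single p k 1) = lp.single p (f k) 1) (hx : S x = lam • x) (k : ι) :
    x k = lam * x (f k) := by
  rw [← apply_map_of_map_single hp hf hS x k, hx]
  rfl

theorem norm_eq_one_of_map_eq_smul (hp : p ≠ ∞) (hf : Injective f)
    (hS : ∀ k, S (lp.single p k 1) = lp.single p (f k) 1) (hx₀ : x ≠ 0) (hx : S x = lam • x) :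
    ‖lam‖ = 1 := by
  have h := norm_map_of_map_single hp hf hS x
  rw [hx, norm_smul] at h
  exact (mul_eq_right₀ (norm_ne_zero_iff.2 hx₀)).1 h

theorem apply_eq_zero_of_notMem_periodicPts (hp : p ≠ ∞) (hf : Injective f)
    (hS : ∀ k, S (lp.single p k 1) = lp.single p (f k) 1) (hx₀ : x ≠ 0) (hx : S x = lam • x)
    {k : ι} (hk : k ∉ periodicPts f) : x k = 0 := by
  have hp₀ : 0 < p.toReal := ENNReal.toReal_pos (zero_lt_one.trans_le Fact.out).ne' hp
  have hlam := norm_eq_one_of_map_eq_smul hp hf hS hx₀ hx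
  have horbit : ∀ n, ‖x (f^[n] k)‖ = ‖x k‖ := by
    intro n
    induction n with
    | zero => rfl
    | succ n ih =>
      rw [iterate_succ_apply', ← ih, apply_eq_mul_apply_of_map_eq_smul hp hf hS hx (f^[n] k),
        norm_mul, hlam, one_mul]
  exact norm_eq_zero.1 <|
    eq_zero_of_norm_comp_injective_eq hp₀ x (hf.injective_iterate_of_notMem_periodicPts hk) horbit

theorem eq_smul_single_of_map_eq_smul (hp : p ≠ ∞) (hf : Injective f)
    (hS : ∀ k, S (lp.single p k 1) = lp.single p (f k) 1) {j : ι}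
    (hper : ∀ k ≠ j, k ∉ periodicPts f) (hx₀ : x ≠ 0) (hx : S x = lam • x) :
    x = x j • lp.single p j 1 := by
  ext n
  by_cases hn : n = j
  · simp [hn]
  · simp [hn, apply_eq_zero_of_notMem_periodicPts hp hf hS hx₀ hx (hper n hn)]

theorem eq_one_of_map_eq_smul_of_apply_fixedPt_ne_zero (hp : p ≠ ∞) (hf : Injective f)
    (hS : ∀ k, S (lp.single p k 1) = lp.single p (f k) 1) {j : ι} (hj : f j = j)
    (hxj : x j ≠ 0) (hx : S x = lam • x) : lam = 1 := by
  have h := apply_eq_mul_apply_of_map_eq_smul hp hf hS hx j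
  rw [hj, eq_comm] at h
  exact (mul_eq_right₀ hxj).1 h

end lp

/-- If the injection `f` has a unique fixed point `j̄` and no other periodic points,
then the point spectrum of `S_f` is exactly `{1}` and every eigenvector is a multiple
of `e j̄`. -/
theorem stmt3 (f : ℕ → ℕ) (hf : Function.Injective f)
    (jbar : ℕ) (hfix : f jbar = jbar)
    (hper : ∀ (k h : ℕ), 1 ≤ h → k ≠ jbar → f^[h] k ≠ k)
    (S : lp (fun _ : ℕ => ℂ) 2 →L[ℂ] lp (fun _ : ℕ => ℂ) 2)
    (hS : ∀ k, S (e k) = e (f k)) :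
    (∀ lam : ℂ, (∃ x : lp (fun _ : ℕ => ℂ) 2, x ≠ 0 ∧ S x = lam • x) ↔ lam = 1) ∧
    (∀ (x : lp (fun _ : ℕ => ℂ) 2) (lam : ℂ), x ≠ 0 → S x = lam • x →
      ∃ c : ℂ, x = c • e jbar) := by
  have hp : (2 : ℝ≥0∞) ≠ ∞ := ENNReal.ofNat_ne_top
  have hnonper : ∀ k ≠ jbar, k ∉ periodicPts f :=
    fun k hk ⟨h, hh, hk'⟩ => hper k h hh hk hk'
  have heigen : ∀ (x : lp (fun _ : ℕ => ℂ) 2) (lam : ℂ), x ≠ 0 → S x = lam • x →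
      lam = 1 ∧ x = x jbar • e jbar := by
    intro x lam hx₀ hx
    have hxe := lp.eq_smul_single_of_map_eq_smul hp hf hS hnonper hx₀ hx
    have hxj : x jbar ≠ 0 := fun h => hx₀ (by rw [hxe, h, zero_smul])
    exact ⟨lp.eq_one_of_map_eq_smul_of_apply_fixedPt_ne_zero hp hf hS hfix hxj hx, hxe⟩
  refine ⟨fun lam => ⟨fun ⟨x, hx₀, hx⟩ => (heigen x lam hx₀ hx).1, ?_⟩,
    fun x lam hx₀ hx => ⟨x jbar, (heigen x lam hx₀ hx).2⟩⟩
  rintro rfl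
  refine ⟨e jbar, fun h => one_ne_zero (α := ℂ) ?_, by rw [hS, hfix, one_smul]⟩
  simpa [e] using congrArg (· jbar) h
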